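/- Under the hypotheses T + RA = I, range(R) ⊆ range(Aᵀ), and ‖T P_{range(Aᵀ)}‖ < 1, the affine operator Q(x) := Tx + Rb satisfies: ‖Q(x) − Q(y)‖ ≤ ‖x − y‖ for all x, y ∈ ℝⁿ, and if ‖Q(x) − Q(y)‖ = ‖x − y‖ then Q(x) − Q(y) = x − y and ⟨x − y, Q(y) − y⟩ = 0. -/

import Mathlib

/-!
Write `V = range Aᵀ`. From `T = I - RA`, the matrix `T` fixes `Vᗮ = ker A` pointwise, and since
`range R ⊆ V` it maps `V` into itself, where `‖T P_V‖ < 1` makes it a strict contraction. Splitting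
`z = P_V z + P_{Vᗮ} z` orthogonally gives `‖Tz‖² = ‖T P_V z‖² + ‖P_{Vᗮ} z‖² ≤ ‖z‖²`, with equality
only if `P_V z = 0`, i.e. `z ∈ Vᗮ`, and then `Tz = z`. Applied to `z = x - y` this is the claim,
because `Q x - Q y = T (x - y)` and `Q y - y = R (b - A y) ∈ V`.
-/

open Matrix

/-- The continuous linear map on Euclidean spaces induced by a matrix. -/
noncomputable def mulE {m n : ℕ} (A : Matrix (Fin m) (Fin n) ℝ) :
    EuclideanSpace ℝ (Fin n) →L[ℝ] EuclideanSpace ℝ (Fin m) :=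
  LinearMap.toContinuousLinearMap (Matrix.toEuclideanLin A)

/-- The orthogonal projection of the ambient space onto a subspace, as a map of the
ambient space. -/
noncomputable def projCLM {n : ℕ} (V : Submodule ℝ (EuclideanSpace ℝ (Fin n))) :
    EuclideanSpace ℝ (Fin n) →L[ℝ] EuclideanSpace ℝ (Fin n) :=
  V.subtypeL.comp (V.orthogonalProjection)

namespace Submodule

variable {E : Type*} [NormedAddCommGroup E] [InnerProductSpace ℝ E]
  {V : Submodule ℝ E} [V.HasOrthogonalProjection]

section InvariantFixingOrthogonal

variable {F : Type*} [FunLike F E E] [LinearMapClass F ℝ E E] {L : F}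
  (hLV : ∀ u ∈ V, L u ∈ V) (hfix : ∀ v ∈ Vᗮ, L v = v)
include hLV hfix

theorem norm_sq_apply_eq_add_norm_sq_starProjection (z : E) :
    ‖L z‖ ^ 2 = ‖L (V.starProjection z)‖ ^ 2 + ‖Vᗮ.starProjection z‖ ^ 2 := by
  have hsplit : L z = L (V.starProjection z) + Vᗮ.starProjection z := by
    conv_lhs => rw [← V.starProjection_add_starProjection_orthogonal z]
    rw [map_add, hfix _ (Vᗮ.starProjection_apply_mem z)]
  have horth : inner ℝ (L (V.starProjection z)) (Vᗮ.starProjection z) = (0 : ℝ) :=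
    inner_right_of_mem_orthogonal (hLV _ (V.starProjection_apply_mem z))
      (Vᗮ.starProjection_apply_mem z)
  rw [hsplit, sq, sq, sq, norm_add_sq_eq_norm_sq_add_norm_sq_real horth]

theorem norm_apply_le_of_norm_apply_le_on (hcontr : ∀ u ∈ V, ‖L u‖ ≤ ‖u‖) (z : E) :
    ‖L z‖ ≤ ‖z‖ := by
  have hPz := hcontr _ (V.starProjection_apply_mem z)
  refine (sq_le_sq₀ (norm_nonneg _) (norm_nonneg _)).mp ?_
  rw [norm_sq_apply_eq_add_norm_sq_starProjection hLV hfix,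
    norm_sq_eq_add_norm_sq_starProjection z V]
  gcongr

theorem mem_orthogonal_of_norm_apply_eq (hstrict : ∀ u ∈ V, u ≠ 0 → ‖L u‖ < ‖u‖) {z : E}
    (h : ‖L z‖ = ‖z‖) : z ∈ Vᗮ := by
  by_contra hz
  have hlt := hstrict _ (V.starProjection_apply_mem z)
    (mt V.starProjection_apply_eq_zero_iff.mp hz)
  have hsq : ‖L z‖ ^ 2 = ‖z‖ ^ 2 := by rw [h]
  rw [norm_sq_apply_eq_add_norm_sq_starProjection hLV hfix,
    norm_sq_eq_add_norm_sq_starProjection z V] at hsq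
  have := pow_lt_pow_left₀ hlt (norm_nonneg _) two_ne_zero
  linarith

end InvariantFixingOrthogonal

theorem norm_apply_lt_of_opNorm_comp_starProjection_lt_one {L : E →L[ℝ] E}
    (hL : ‖L ∘L V.starProjection‖ < 1) {u : E} (hu : u ∈ V) (hu0 : u ≠ 0) : ‖L u‖ < ‖u‖ :=
  calc ‖L u‖ = ‖(L ∘L V.starProjection) u‖ := by
        rw [ContinuousLinearMap.comp_apply, V.starProjection_eq_self_iff.mpr hu]
    _ ≤ ‖L ∘L V.starProjection‖ * ‖u‖ := ContinuousLinearMap.le_opNorm _ _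
    _ < ‖u‖ := mul_lt_of_lt_one_left (norm_pos_iff.mpr hu0) hL

end Submodule

theorem mulE_apply_eq_zero_of_mem_orthogonal_range {m n : ℕ} (A : Matrix (Fin m) (Fin n) ℝ)
    {v : EuclideanSpace ℝ (Fin n)} (hv : v ∈ (LinearMap.range (toEuclideanLin Aᵀ))ᗮ) :
    mulE A v = 0 := by
  rw [LinearMap.orthogonal_range, ← toEuclideanLin_conjTranspose_eq_adjoint,
    conjTranspose_eq_transpose_of_trivial, transpose_transpose] at hv
  exact hv

theorem mulE_apply_eq_sub_of_add_mul_eq_one {m n : ℕ} {A : Matrix (Fin m) (Fin n) ℝ}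
    {T : Matrix (Fin n) (Fin n) ℝ} {R : Matrix (Fin n) (Fin m) ℝ} (h : T + R * A = 1)
    (x : EuclideanSpace ℝ (Fin n)) : mulE T x = x - mulE R (mulE A x) := by
  rw [eq_sub_of_add_eq h]
  simp [mulE]

/-- Under `T + RA = I`, `range R ⊆ range Aᵀ`, `‖T P_{range Aᵀ}‖ < 1`, the affine
operator `Q(x) = Tx + Rb` is nonexpansive, and in the equality case
`‖Q(x) − Q(y)‖ = ‖x − y‖` one has `Q(x) − Q(y) = x − y` and `⟨x − y, Q(y) − y⟩ = 0`. -/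
theorem Q_in_F1 (m n : ℕ)
    (A : Matrix (Fin m) (Fin n) ℝ) (b : EuclideanSpace ℝ (Fin m))
    (T : Matrix (Fin n) (Fin n) ℝ)
    (R : Matrix (Fin n) (Fin m) ℝ)
    (h1 : T + R * A = 1)
    (h2 : ∀ y : EuclideanSpace ℝ (Fin m),
      mulE R y ∈ LinearMap.range (Matrix.toEuclideanLin Aᵀ))
    (h3 : ‖(mulE T).comp (projCLM (LinearMap.range (Matrix.toEuclideanLin Aᵀ)))‖ < 1)
    (Q : EuclideanSpace ℝ (Fin n) → EuclideanSpace ℝ (Fin n))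
    (hQ : ∀ x, Q x = mulE T x + mulE R b) :
    (∀ x y, ‖Q x - Q y‖ ≤ ‖x - y‖) ∧
    (∀ x y, ‖Q x - Q y‖ = ‖x - y‖ →
      Q x - Q y = x - y ∧ inner ℝ (x - y) (Q y - y) = (0 : ℝ)) := by
  set V := LinearMap.range (toEuclideanLin Aᵀ)
  have hT := mulE_apply_eq_sub_of_add_mul_eq_one h1
  have hfix : ∀ v ∈ Vᗮ, mulE T v = v := fun v hv => by
    rw [hT, mulE_apply_eq_zero_of_mem_orthogonal_range A hv, map_zero, sub_zero]
  have hLV : ∀ u ∈ V, mulE T u ∈ V := fun u hu => by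
    rw [hT]
    exact V.sub_mem hu (h2 _)
  have hstrict : ∀ u ∈ V, u ≠ 0 → ‖mulE T u‖ < ‖u‖ := fun u hu hu0 =>
    Submodule.norm_apply_lt_of_opNorm_comp_starProjection_lt_one h3 hu hu0
  have hcontr : ∀ u ∈ V, ‖mulE T u‖ ≤ ‖u‖ := fun u hu =>
    (eq_or_ne u 0).elim (fun hu0 => by simp [hu0]) fun hu0 => (hstrict u hu hu0).le
  have hQsub : ∀ x y, Q x - Q y = mulE T (x - y) := fun x y => by
    rw [hQ, hQ, map_sub]
    abel
  refine ⟨fun x y => ?_, fun x y heq => ?_⟩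
  · rw [hQsub]
    exact Submodule.norm_apply_le_of_norm_apply_le_on hLV hfix hcontr _
  rw [hQsub] at heq ⊢
  have horth := Submodule.mem_orthogonal_of_norm_apply_eq hLV hfix hstrict heq
  have hQy : Q y - y ∈ V := by
    rw [hQ, hT]
    convert V.sub_mem (h2 b) (h2 (mulE A y)) using 1
    abel
  refine ⟨hfix _ horth, ?_⟩
  rw [real_inner_comm]
  exact V.inner_right_of_mem_orthogonal hQy horth
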